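/- If g₁ > 0, then v_{gust,nom}(t) ≤ g₁ for every t ∈ ℝ, and v_{gust,nom}(t) = g₁ exactly when t lies in the plateau interval [t_{g1}/2, t_{g1}/2 + t_h]; thus the maximum gust magnitude g₁ is attained precisely on the plateau. -/
import Mathlib


/-- The piecewise gust shape `v_{gust,nom}` with `g₃ = 6`, `g_{2r} = 2g₃/t_{g1}`,
`g_{2f} = 2g₃/t_{g2}`, and `t* = t + (t_{g2} − t_{g1})/2 − t_h`. -/
noncomputable def vGustNom (g1 tg1 tg2 th g4 g5 : ℝ) (t : ℝ) : ℝ :=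
  if t < tg1 / 2 then
    g1 * (1 - (2 * 6 / tg1 * t - 6) ^ 2) * Real.exp (-(2 * 6 / tg1 * t - 6) ^ 2 / g4)
  else if t ≤ tg1 / 2 + th then g1
  else
    g1 * (1 - (2 * 6 / tg2 * (t + (tg2 - tg1) / 2 - th) - 6) ^ 2) *
      Real.exp (-(2 * 6 / tg2 * (t + (tg2 - tg1) / 2 - th) - 6) ^ 2 / g5)

/-- If `g₁ > 0`, the gust shape never exceeds `g₁`, and equals `g₁` exactly on the plateau
interval `[t_{g1}/2, t_{g1}/2 + t_h]`. -/
theorem vGustNom_max_on_plateau (g1 tg1 tg2 th g4 g5 : ℝ) (hg1 : 0 < g1)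
    (htg1 : 0 < tg1) (htg2 : 0 < tg2) (hth : 0 < th) (hg4 : 0 < g4) (hg5 : 0 < g5) :
    (∀ t : ℝ, vGustNom g1 tg1 tg2 th g4 g5 t ≤ g1) ∧
    (∀ t : ℝ, vGustNom g1 tg1 tg2 th g4 g5 t = g1 ↔ t ∈ Set.Icc (tg1 / 2) (tg1 / 2 + th)) := by
  have aux : ∀ x c : ℝ, 0 < c → x ≠ 0 → (1 - x ^ 2) * Real.exp (-x ^ 2 / c) < 1 := by
    intro x c hc hx
    have hx2 : 0 < x ^ 2 := by positivity
    have hexp : Real.exp (-x ^ 2 / c) < 1 := by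
      rw [Real.exp_lt_one_iff]
      exact div_neg_of_neg_of_pos (by linarith) hc
    rcases le_or_gt (1 - x ^ 2) 0 with h | h
    · have := mul_nonpos_of_nonpos_of_nonneg h (Real.exp_pos (-x ^ 2 / c)).le
      linarith
    · nlinarith [mul_lt_mul_of_pos_left hexp h]
  have key : ∀ t : ℝ, t ∉ Set.Icc (tg1 / 2) (tg1 / 2 + th) →
      vGustNom g1 tg1 tg2 th g4 g5 t < g1 := by
    intro t ht
    rw [Set.mem_Icc, not_and_or, not_le, not_le] at ht
    unfold vGustNom
    rcases ht with ht | ht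
    · rw [if_pos ht]
      have hx : 2 * 6 / tg1 * t - 6 < 0 := by
        rw [sub_neg, div_mul_eq_mul_div, div_lt_iff₀ htg1]; linarith
      have := aux (2 * 6 / tg1 * t - 6) g4 hg4 (ne_of_lt hx)
      calc g1 * (1 - (2 * 6 / tg1 * t - 6) ^ 2) *
            Real.exp (-(2 * 6 / tg1 * t - 6) ^ 2 / g4)
          = g1 * ((1 - (2 * 6 / tg1 * t - 6) ^ 2) *
            Real.exp (-(2 * 6 / tg1 * t - 6) ^ 2 / g4)) := by ring
        _ < g1 * 1 := by exact mul_lt_mul_of_pos_left this hg1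
        _ = g1 := mul_one g1
    · have h1 : ¬ t < tg1 / 2 := by linarith
      rw [if_neg h1, if_neg (not_le.mpr ht)]
      set s := t + (tg2 - tg1) / 2 - th with hs
      have hx : 0 < 2 * 6 / tg2 * s - 6 := by
        rw [sub_pos, div_mul_eq_mul_div, lt_div_iff₀ htg2, hs]; linarith
      have := aux (2 * 6 / tg2 * s - 6) g5 hg5 (ne_of_gt hx)
      calc g1 * (1 - (2 * 6 / tg2 * s - 6) ^ 2) * Real.exp (-(2 * 6 / tg2 * s - 6) ^ 2 / g5)
          = g1 * ((1 - (2 * 6 / tg2 * s - 6) ^ 2) *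
            Real.exp (-(2 * 6 / tg2 * s - 6) ^ 2 / g5)) := by ring
        _ < g1 * 1 := mul_lt_mul_of_pos_left this hg1
        _ = g1 := mul_one g1
  have plateau : ∀ t : ℝ, t ∈ Set.Icc (tg1 / 2) (tg1 / 2 + th) →
      vGustNom g1 tg1 tg2 th g4 g5 t = g1 := by
    intro t ht
    rw [Set.mem_Icc] at ht
    unfold vGustNom
    rw [if_neg (not_lt.mpr ht.1), if_pos ht.2]
  constructor
  · intro t
    by_cases ht : t ∈ Set.Icc (tg1 / 2) (tg1 / 2 + th)
    · exact (plateau t ht).le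
    · exact (key t ht).le
  · intro t
    constructor
    · intro h
      by_contra ht
      exact absurd h (ne_of_lt (key t ht))
    · exact plateau t
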